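/- Let C be a finite Markov chain where each non-target state has exactly two successors (both with positive probability), with absorbing targets fin and fail. If a non-target state u lies in a never-worse-relation equivalence class A ⊆ S and u reaches A almost surely (ℙ^u[◇A] = 1 for all graph-preserving probability assignments — equivalently every infinite run from u hits A), then ℙ^{val}(u → fin) = ℙ^{val}(v → fin) for every v ∈ A and every graph-preserving valuation val. In particular u belongs to A. -/

import Mathlib

/-- Probability of a finite run: product of the transition probabilities
along consecutive pairs. -/
noncomputable def runProb {S : Type*} (μ : S → S → ℝ) (l : List S) : ℝ :=
  ((l.zip l.tail).map fun p => μ p.1 p.2).prod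

/-- The set of runs `s₀ … sₙ ∈ (S \ B)⁺ B`: nonempty words starting at `s₀`,
staying outside `B` until the last step, ending in `B`, following
positive-probability transitions. -/
def ReachRuns {S : Type*} (μ : S → S → ℝ) (B : Set S) (s₀ : S) : Set (List S) :=
  {l | l ≠ [] ∧ l.head? = some s₀ ∧ (∀ x ∈ l.dropLast, x ∉ B) ∧
    (∃ t ∈ B, l.getLast? = some t) ∧ l.Chain' fun a b => 0 < μ a b}

-- Probability of reaching `B` from `s₀`: 1 if `s₀ ∈ B`, otherwise the sum of
-- the probabilities of all runs in `(S\B)⁺B` from `s₀`.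
open Classical in
noncomputable def reachProb {S : Type*} (μ : S → S → ℝ) (B : Set S) (s₀ : S) : ℝ :=
  if s₀ ∈ B then 1 else ∑' l : ReachRuns μ B s₀, runProb μ (l : List S)

/-- Graph-preserving valuations of a trivially parametric Markov chain with
graph `E` and absorbing targets `fin`, `fail`: positive probability exactly on
the edges, rows of non-target states summing to 1. -/
def gpMC {S : Type*} [Fintype S] (E : S → S → Prop) (fin fail : S)
    (val : S → S → ℝ) : Prop :=
  (∀ s s', E s s' → 0 < val s s') ∧ (∀ s s', ¬ E s s' → val s s' = 0) ∧
  (∀ s, s ≠ fin → s ≠ fail → ∑ s' : S, val s s' = 1)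

/-- NWR-equivalence of two states of a trivially parametric Markov chain. -/
def nwrEquiv {S : Type*} [Fintype S] (E : S → S → Prop) (fin fail : S)
    (u v : S) : Prop :=
  ∀ val, gpMC E fin fail val →
    reachProb val {fin} u = reachProb val {fin} v

-- STATEMENT 9: in a trivially parametric Markov chain where every non-target
-- state has exactly two successors, if `A` is an NWR equivalence class and
-- the non-target state `u` reaches `A` almost surely under every
-- graph-preserving valuation, then `u` has the same value as every member of
-- `A` under every graph-preserving valuation; in particular `u ∈ A`.
@[simp] lemma runProb_nil {S : Type*} (μ : S → S → ℝ) : runProb μ [] = 1 := rfl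
@[simp] lemma runProb_singleton {S : Type*} (μ : S → S → ℝ) (a : S) : runProb μ [a] = 1 := by
  simp [runProb]
lemma runProb_cons_cons {S : Type*} (μ : S → S → ℝ) (a b : S) (t : List S) :
    runProb μ (a :: b :: t) = μ a b * runProb μ (b :: t) := by
  simp [runProb]

lemma runProb_pos {S : Type*} {μ : S → S → ℝ} : ∀ {l : List S},
    l.Chain' (fun a b => 0 < μ a b) → 0 < runProb μ l
  | [], _ => by simp
  | [a], _ => by simp
  | a :: b :: t, h => by
    rw [runProb_cons_cons]
    rcases List.isChain_cons_cons.mp h with ⟨h1, h2⟩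
    exact mul_pos h1 (runProb_pos h2)

lemma runProb_append {S : Type*} (μ : S → S → ℝ) (a : S) (l₂ : List S) : ∀ (l₁ : List S),
    runProb μ (l₁ ++ a :: l₂) = runProb μ (l₁ ++ [a]) * runProb μ (a :: l₂)
  | [] => by simp
  | [x] => by simp [runProb_cons_cons]
  | x :: y :: t => by
    have := runProb_append μ a l₂ (y :: t)
    simp only [List.cons_append] at *
    rw [runProb_cons_cons, this, runProb_cons_cons, mul_assoc]

open Finset in
lemma prefixfree_sum_le {S : Type*} [Fintype S] [DecidableEq S] {μ : S → S → ℝ}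
    (hnn : ∀ a b, 0 ≤ μ a b) (hrow : ∀ a, ∑ b : S, μ a b ≤ 1) :
    ∀ (n : ℕ) (s₀ : S) (F : Finset (List S)),
      (∀ l ∈ F, l.length ≤ n) →
      (∀ l ∈ F, l ≠ [] ∧ l.head? = some s₀ ∧ l.Chain' fun a b => 0 < μ a b) →
      (∀ l ∈ F, ∀ m ∈ F, l ≠ m → ¬ l <+: m) →
      ∑ l ∈ F, runProb μ l ≤ 1 := by
  intro n
  induction n with
  | zero =>
    intro s₀ F hlen hpath _
    have : F = ∅ := by
      by_contra h
      obtain ⟨l, hl⟩ := Finset.nonempty_iff_ne_empty.mpr h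
      exact (hpath l hl).1 (List.length_eq_zero_iff.mp (Nat.le_zero.mp (hlen l hl)))
    simp [this]
  | succ n ih =>
    intro s₀ F hlen hpath hpf
    by_cases h1 : [s₀] ∈ F
    · have hF : F = {[s₀]} := by
        apply Finset.eq_singleton_iff_unique_mem.mpr
        refine ⟨h1, fun m hm => ?_⟩
        by_contra hms
        apply hpf [s₀] h1 m hm (Ne.symm hms)
        obtain ⟨t, rfl⟩ := List.head?_eq_some_iff.mp (hpath m hm).2.1
        exact ⟨t, rfl⟩
      simp [hF]
    · -- every element has length ≥ 2
      have hshape : ∀ l ∈ F, ∃ s' t, l = s₀ :: s' :: t := by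
        intro l hl
        obtain ⟨t, rfl⟩ := List.head?_eq_some_iff.mp (hpath l hl).2.1
        cases t with
        | nil => exact absurd hl h1
        | cons s' t => exact ⟨s', t, rfl⟩
      have key := Finset.sum_fiberwise_of_maps_to
        (s := F) (g := fun l : List S => l.tail.head?) (t := (Finset.univ : Finset (Option S)))
        (fun l _ => Finset.mem_univ _) (runProb μ)
      rw [← key]
      have hnone : F.filter (fun l => l.tail.head? = (none : Option S)) = ∅ := by
        apply Finset.filter_eq_empty_iff.mpr
        intro l hl
        obtain ⟨s', t, rfl⟩ := hshape l hl
        simp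
      have hfib : ∀ s' : S, ∑ l ∈ F.filter (fun l => l.tail.head? = some s'), runProb μ l
          ≤ μ s₀ s' := by
        intro s'
        set Ff := F.filter (fun l => l.tail.head? = some s') with hFf
        have hmem : ∀ l ∈ Ff, ∃ t, l = s₀ :: s' :: t := by
          intro l hl
          rw [hFf, Finset.mem_filter] at hl
          obtain ⟨s'', t, rfl⟩ := hshape l hl.1
          simp at hl
          exact ⟨t, by rw [hl.2]⟩
        have hinj : Set.InjOn List.tail (Ff : Set (List S)) := by
          intro a ha b hb hab
          obtain ⟨ta, rfl⟩ := hmem a ha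
          obtain ⟨tb, rfl⟩ := hmem b hb
          simpa using hab
        have himg : ∑ l ∈ Ff, runProb μ l = μ s₀ s' * ∑ t ∈ Ff.image List.tail, runProb μ t := by
          rw [Finset.mul_sum, Finset.sum_image (fun a ha b hb => hinj (Finset.mem_coe.mpr ha) (Finset.mem_coe.mpr hb))]
          apply Finset.sum_congr rfl
          intro l hl
          obtain ⟨t, rfl⟩ := hmem l hl
          simp [runProb_cons_cons]
        rw [himg]
        have htail : ∑ t ∈ Ff.image List.tail, runProb μ t ≤ 1 := by
          apply ih s'
          · intro t ht
            obtain ⟨l, hl, rfl⟩ := Finset.mem_image.mp ht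
            have := hlen l (Finset.mem_filter.mp hl).1
            obtain ⟨t', rfl⟩ := hmem l hl
            simp at this ⊢; omega
          · intro t ht
            obtain ⟨l, hl, rfl⟩ := Finset.mem_image.mp ht
            obtain ⟨t', rfl⟩ := hmem l hl
            refine ⟨by simp, by simp, ?_⟩
            exact ((hpath _ (Finset.mem_filter.mp hl).1).2.2).tail
          · intro t₁ ht₁ t₂ ht₂ hne hpre
            obtain ⟨l₁, hl₁, rfl⟩ := Finset.mem_image.mp ht₁
            obtain ⟨l₂, hl₂, rfl⟩ := Finset.mem_image.mp ht₂
            obtain ⟨t₁', e₁⟩ := hmem l₁ hl₁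
            obtain ⟨t₂', e₂⟩ := hmem l₂ hl₂
            apply hpf l₁ (Finset.mem_filter.mp hl₁).1 l₂ (Finset.mem_filter.mp hl₂).1
            · intro h; rw [h] at hne; exact hne rfl
            · rw [e₁, e₂] at hpre ⊢
              simp only [List.tail_cons] at hpre
              exact List.cons_prefix_cons.mpr ⟨rfl, hpre⟩
        calc μ s₀ s' * ∑ t ∈ Ff.image List.tail, runProb μ t
            ≤ μ s₀ s' * 1 := by
              apply mul_le_mul_of_nonneg_left htail (hnn _ _)
          _ = μ s₀ s' := mul_one _
      calc ∑ o : Option S, ∑ l ∈ F.filter (fun l => l.tail.head? = o), runProb μ l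
          = ∑ s' : S, ∑ l ∈ F.filter (fun l => l.tail.head? = some s'), runProb μ l := by
            rw [Fintype.sum_option, hnone, Finset.sum_empty, zero_add]
        _ ≤ ∑ s' : S, μ s₀ s' := Finset.sum_le_sum (fun s' _ => hfib s')
        _ ≤ 1 := hrow s₀

section Aux
set_option linter.unusedSectionVars false
variable {S : Type*} [Fintype S] {μ : S → S → ℝ} {B : Set S} {s₀ : S}

lemma ReachRuns.getLast_mem {l : List S} (hl : l ∈ ReachRuns μ B s₀) :
    ∃ h : l ≠ [], l.getLast h ∈ B := by
  obtain ⟨t, ht, hlt⟩ := hl.2.2.2.1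
  obtain ⟨h, rfl⟩ := List.mem_getLast?_eq_getLast hlt
  exact ⟨hl.1, ht⟩

lemma ReachRuns.prefixfree {l m : List S} (hl : l ∈ ReachRuns μ B s₀)
    (hm : m ∈ ReachRuns μ B s₀) (hne : l ≠ m) : ¬ l <+: m := by
  rintro ⟨r, rfl⟩
  have hr : r ≠ [] := by rintro rfl; simp at hne
  obtain ⟨hl0, hlast⟩ := ReachRuns.getLast_mem hl
  apply hm.2.2.1 (l.getLast hl0) _ hlast
  rw [List.dropLast_append, if_neg (by simpa using hr)]
  exact List.mem_append_left _ (List.getLast_mem hl0)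

/-- Elements of the dropLast of a chain have a successor. -/
lemma exists_rel_of_mem_dropLast {R : S → S → Prop} {a : S} : ∀ {l : List S},
    l.Chain' R → a ∈ l.dropLast → ∃ b, R a b
  | [], _, h => by simp at h
  | [x], _, h => by simp at h
  | x :: y :: t, hc, h => by
    rw [List.dropLast_cons₂, List.mem_cons] at h
    rcases h with rfl | h
    · exact ⟨y, (List.isChain_cons_cons.mp hc).1⟩
    · exact exists_rel_of_mem_dropLast (List.isChain_cons_cons.mp hc).2 h

/-- ENNReal-valued reach probability. -/
noncomputable def Q {S : Type*} (μ : S → S → ℝ) (B : Set S) (s₀ : S) : ENNReal :=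
  ∑' l : ReachRuns μ B s₀, ENNReal.ofReal (runProb μ (l : List S))

lemma Q_le_one (hnn : ∀ a b, 0 ≤ μ a b) (hrow : ∀ a, ∑ b : S, μ a b ≤ 1) :
    Q μ B s₀ ≤ 1 := by
  classical
  rw [Q, ENNReal.tsum_eq_iSup_sum]
  apply iSup_le
  intro F
  have h1 : ∑ l ∈ F, ENNReal.ofReal (runProb μ (l : List S))
      = ENNReal.ofReal (∑ l ∈ F, runProb μ (l : List S)) :=
    (ENNReal.ofReal_sum_of_nonneg (fun l _ => (runProb_pos (l.2.2.2.2.2)).le)).symm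
  rw [h1]
  have h2 : ∑ l ∈ F, runProb μ (l : List S)
      = ∑ l ∈ F.image (Subtype.val), runProb μ l := by
    rw [Finset.sum_image (fun a _ b _ h => Subtype.coe_injective h)]
  rw [h2]
  have h3 : ∑ l ∈ F.image Subtype.val, runProb μ l ≤ 1 := by
    apply prefixfree_sum_le hnn hrow ((F.image Subtype.val).sup List.length) s₀
    · intro l hl; exact Finset.le_sup (f := List.length) hl
    · intro l hl
      obtain ⟨⟨l, hl'⟩, _, rfl⟩ := Finset.mem_image.mp hl
      exact ⟨hl'.1, hl'.2.1, hl'.2.2.2.2⟩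
    · intro l hl m hm hne
      obtain ⟨⟨l, hl'⟩, _, rfl⟩ := Finset.mem_image.mp hl
      obtain ⟨⟨m, hm'⟩, _, rfl⟩ := Finset.mem_image.mp hm
      exact ReachRuns.prefixfree hl' hm' hne
  calc ENNReal.ofReal (∑ l ∈ F.image Subtype.val, runProb μ l)
      ≤ ENNReal.ofReal 1 := ENNReal.ofReal_le_ofReal h3
    _ = 1 := ENNReal.ofReal_one

lemma reachProb_eq_toReal_Q (hs : s₀ ∉ B) : reachProb μ B s₀ = (Q μ B s₀).toReal := by
  rw [reachProb, if_neg hs, Q, ENNReal.tsum_toReal_eq (fun _ => ENNReal.ofReal_ne_top)]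
  exact tsum_congr fun l => (ENNReal.toReal_ofReal (runProb_pos (l.2.2.2.2.2)).le).symm

lemma ofReal_reachProb_eq_Q (hs : s₀ ∉ B) (hnn : ∀ a b, 0 ≤ μ a b)
    (hrow : ∀ a, ∑ b : S, μ a b ≤ 1) :
    ENNReal.ofReal (reachProb μ B s₀) = Q μ B s₀ := by
  rw [reachProb_eq_toReal_Q hs,
    ENNReal.ofReal_toReal (ne_top_of_le_ne_top ENNReal.one_ne_top (Q_le_one hnn hrow))]

end Aux

section Decomp
set_option linter.unusedSectionVars false
variable {S : Type*} [Fintype S] {μ : S → S → ℝ} {A : Set S} {fin u : S}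

/-- takeWhile/dropWhile of an append where the first block satisfies `p` and
the second starts by violating it. -/
lemma takeWhile_dropWhile_append {α : Type*} {p : α → Bool} :
    ∀ {l₁ l₂ : List α}, (∀ x ∈ l₁, p x = true) → (∀ y ∈ l₂.head?, p y = false) →
      (l₁ ++ l₂).takeWhile p = l₁ ∧ (l₁ ++ l₂).dropWhile p = l₂
  | [], l₂, _, h2 => by
    cases l₂ with
    | nil => simp
    | cons y t => simp [List.takeWhile_cons, List.dropWhile_cons, h2 y rfl]
  | x :: l₁, l₂, h1, h2 => by
    have hx := h1 x (List.mem_cons_self (a := x) (l := l₁))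
    have ih := takeWhile_dropWhile_append (l₁ := l₁) (l₂ := l₂)
      (fun a ha => h1 a (List.mem_cons_of_mem x ha)) h2
    simp [List.takeWhile_cons, List.dropWhile_cons, hx, ih.1, ih.2]

lemma head?_dropLast {α : Type*} : ∀ {l : List α}, 2 ≤ l.length →
    l.dropLast.head? = l.head?
  | a :: b :: t, _ => by rw [List.dropLast_cons₂]; rfl

open Classical in
private noncomputable def pA (A : Set S) : S → Bool := fun x => decide (x ∉ A)

lemma pA_true {x : S} : pA A x = true ↔ x ∉ A := by simp [pA]
lemma pA_false {x : S} : pA A x = false ↔ x ∈ A := by simp [pA]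

/-- Facts about a run in `ReachRuns μ A u` when `u ∉ A`. -/
lemma RA_facts {l : List S} (huA : u ∉ A) (hl : l ∈ ReachRuns μ A u) :
    2 ≤ l.length ∧ (l.getLastD u ∈ A) ∧ l.dropLast ≠ [] ∧
      l.dropLast.head? = some u ∧ ∃ h : l ≠ [], l.getLastD u = l.getLast h := by
  obtain ⟨h0, hlast⟩ := ReachRuns.getLast_mem hl
  have hld : l.getLastD u = l.getLast h0 := by
    rw [List.getLastD_eq_getLast?, List.getLast?_eq_getLast h0]; rfl
  have hlen : 2 ≤ l.length := by
    obtain ⟨t, rfl⟩ := List.head?_eq_some_iff.mp hl.2.1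
    cases t with
    | nil =>
      exfalso; apply huA
      simpa using hlast
    | cons b t => simp only [List.length_cons]; omega
  refine ⟨hlen, hld ▸ hlast, ?_, ?_, h0, hld⟩
  · intro h
    have := congrArg List.length h
    simp [List.length_dropLast] at this
    omega
  · rw [head?_dropLast hlen]; exact hl.2.1

/-- The join map: concatenate a run to `A` with a run from its endpoint to `fin`. -/
lemma join_mem {μ : S → S → ℝ} (hfin0 : ∀ b, μ fin b = 0) (huA : u ∉ A)
    {l d : List S} (hl : l ∈ ReachRuns μ A u)
    (hd : d ∈ ReachRuns μ {fin} (l.getLastD u)) :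
    l.dropLast ++ d ∈ ReachRuns μ {fin} u := by
  obtain ⟨hlen, hlastA, hdl0, hdlhead, h0, hld⟩ := RA_facts huA hl
  have hd0 : d ≠ [] := hd.1
  have hchain : (l.dropLast ++ d).Chain' fun a b => 0 < μ a b := by
    apply List.isChain_append.mpr
    refine ⟨hl.2.2.2.2.prefix (List.dropLast_prefix l), hd.2.2.2.2, ?_⟩
    intro x hx y hy
    have hrw : l.dropLast ++ [l.getLast h0] = l := List.dropLast_append_getLast h0
    have := hl.2.2.2.2
    rw [← hrw] at this
    have hlink := (List.isChain_append.mp this).2.2 x hx (l.getLast h0) rfl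
    have : y = l.getLast h0 := by
      rw [hd.2.1] at hy; rw [hld] at hy; exact (Option.some_inj.mp hy).symm
    rwa [this]
  refine ⟨by simp [hd0], ?_, ?_, ?_, hchain⟩
  · rw [List.head?_append_of_ne_nil _ hdl0]; exact hdlhead
  · intro x hx
    rw [List.dropLast_append, if_neg (by simpa using hd0)] at hx
    rcases List.mem_append.mp hx with hx | hx
    · intro hxfin
      obtain ⟨b, hb⟩ := exists_rel_of_mem_dropLast hl.2.2.2.2 hx
      rw [Set.mem_singleton_iff.mp hxfin] at hb
      rw [hfin0 b] at hb
      exact lt_irrefl 0 hb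
    · exact hd.2.2.1 x hx
  · obtain ⟨t, ht, htl⟩ := hd.2.2.2.1
    exact ⟨t, ht, by rw [List.getLast?_append_of_ne_nil _ hd0]; exact htl⟩

/-- The split of a run to `fin` at its first visit to `A`. -/
lemma split_mem {μ : S → S → ℝ} (huA : u ∉ A) {m : List S}
    (hm : m ∈ ReachRuns μ {fin} u) (hhit : ∃ x ∈ m, x ∈ A) :
    ∃ (hd0 : m.dropWhile (pA A) ≠ []),
      (m.takeWhile (pA A) ++ [(m.dropWhile (pA A)).head hd0] ∈ ReachRuns μ A u) ∧
      (m.dropWhile (pA A) ∈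
        ReachRuns μ {fin}
          ((m.takeWhile (pA A) ++ [(m.dropWhile (pA A)).head hd0]).getLastD u)) := by
  classical
  set t := m.takeWhile (pA A) with ht
  set d := m.dropWhile (pA A) with hdd
  have hd0 : d ≠ [] := by
    rw [hdd, Ne, List.dropWhile_eq_nil_iff]
    push_neg
    obtain ⟨x, hx, hxA⟩ := hhit
    exact ⟨x, hx, by simp [pA_false.mpr hxA]⟩
  have hh : d.head hd0 ∈ A := pA_false.mp (List.head_dropWhile_not (pA A) (l := m) hd0)
  have htd : t ++ d = m := List.takeWhile_append_dropWhile
  have hm0 : m ≠ [] := hm.1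
  have hmu : m.head? = some u := hm.2.1
  have ht0 : t ≠ [] := by
    obtain ⟨ms, rfl⟩ := List.head?_eq_some_iff.mp hmu
    rw [ht, List.takeWhile_cons, if_pos (by exact pA_true.mpr huA)]
    simp
  have hthead : t.head? = some u := by
    obtain ⟨ms, hms⟩ := List.head?_eq_some_iff.mp hmu
    rw [ht, hms, List.takeWhile_cons, if_pos (by exact pA_true.mpr huA)]
    rfl
  have hgl : (t ++ [d.head hd0]).getLastD u = d.head hd0 := by
    rw [List.getLastD_eq_getLast?, List.getLast?_concat]; rfl
  have hpre : t ++ [d.head hd0] <+: m := by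
    refine ⟨d.tail, ?_⟩
    rw [List.append_assoc, List.singleton_append, List.cons_head_tail, htd]
  refine ⟨hd0, ⟨by simp, ?_, ?_, ?_, ?_⟩, ?_⟩
  · rw [List.head?_append_of_ne_nil _ ht0]; exact hthead
  · intro x hx
    rw [List.dropLast_concat] at hx
    exact pA_true.mp (List.mem_takeWhile_imp hx)
  · exact ⟨d.head hd0, hh, List.getLast?_concat⟩
  · exact hm.2.2.2.2.prefix hpre
  · rw [hgl]
    refine ⟨hd0, List.head?_eq_head hd0, ?_, ?_, ?_⟩
    · intro x hx
      apply hm.2.2.1 x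
      rw [← htd, List.dropLast_append, if_neg (by simpa using hd0)]
      exact List.mem_append_right _ hx
    · obtain ⟨w, hw, hwl⟩ := hm.2.2.2.1
      exact ⟨w, hw, by rw [← htd, List.getLast?_append_of_ne_nil _ hd0] at hwl; exact hwl⟩
    · exact hm.2.2.2.2.suffix ⟨t, htd⟩

end Decomp

section Main
set_option linter.unusedSectionVars false
variable {S : Type*} [Fintype S] {μ : S → S → ℝ} {A : Set S} {fin u : S}

lemma reachProb_nonneg (μ : S → S → ℝ) (B : Set S) (s₀ : S) : 0 ≤ reachProb μ B s₀ := by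
  rw [reachProb]; split
  · exact zero_le_one
  · exact tsum_nonneg fun l => (runProb_pos l.2.2.2.2.2).le

lemma ReachRuns_fin_self (hfin0 : ∀ b, μ fin b = 0) :
    ReachRuns μ ({fin} : Set S) fin = {[fin]} := by
  ext l
  constructor
  · rintro ⟨h0, hhead, _, _, hchain⟩
    obtain ⟨t, rfl⟩ := List.head?_eq_some_iff.mp hhead
    cases t with
    | nil => rfl
    | cons b t =>
      exfalso
      have := (List.isChain_cons_cons.mp hchain).1
      rw [hfin0 b] at this
      exact lt_irrefl 0 this
  · rintro rfl
    exact ⟨by simp, rfl, by simp, ⟨fin, rfl, rfl⟩, List.isChain_singleton fin⟩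

lemma Q_fin_self (hfin0 : ∀ b, μ fin b = 0) : Q μ ({fin} : Set S) fin = 1 := by
  rw [Q]
  rw [show (ReachRuns μ ({fin} : Set S) fin) = {[fin]} from ReachRuns_fin_self hfin0]
  rw [tsum_singleton ([fin]) (fun l => ENNReal.ofReal (runProb μ l))]
  simp

lemma sigma_ext' {α γ : Type*} (S₁ : Set α) (f : α → γ) (T : γ → Set α)
    {x y : Σ l : S₁, T (f l.1)} (h1 : (x.1 : α) = y.1) (h2 : (x.2 : α) = y.2) : x = y := by
  obtain ⟨⟨a, ha⟩, ⟨b, hb⟩⟩ := x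
  obtain ⟨⟨c, hc⟩, ⟨d, hd⟩⟩ := y
  dsimp at h1 h2
  subst h1; subst h2
  rfl

lemma hits_of_Q_eq_one (hnn : ∀ a b, 0 ≤ μ a b) (hrow : ∀ a, ∑ b : S, μ a b ≤ 1)
    (hfin0 : ∀ b, μ fin b = 0)
    (hQA : Q μ A u = 1) {m : List S} (hm : m ∈ ReachRuns μ {fin} u) :
    ∃ x ∈ m, x ∈ A := by
  classical
  by_contra hcon
  push_neg at hcon
  have hεpos : 0 < runProb μ m := runProb_pos hm.2.2.2.2
  set ε := runProb μ m with hε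
  have h1 : ENNReal.ofReal (1 - ε) < Q μ A u := by
    rw [hQA]
    rcases le_or_gt (1 - ε) 0 with h | h
    · rw [ENNReal.ofReal_eq_zero.mpr h]; exact zero_lt_one
    · rw [← ENNReal.ofReal_one]
      exact (ENNReal.ofReal_lt_ofReal_iff zero_lt_one).mpr (by linarith)
  rw [Q, ENNReal.tsum_eq_iSup_sum] at h1
  obtain ⟨F, hF⟩ := lt_iSup_iff.mp h1
  have hFsum : 1 - ε < ∑ l ∈ F, runProb μ (l : List S) := by
    by_contra hle
    push_neg at hle
    have : (∑ l ∈ F, ENNReal.ofReal (runProb μ (l : List S)))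
        = ENNReal.ofReal (∑ l ∈ F, runProb μ (l : List S)) :=
      (ENNReal.ofReal_sum_of_nonneg (fun l _ => (runProb_pos l.2.2.2.2.2).le)).symm
    rw [this] at hF
    exact absurd hF (not_lt.mpr (ENNReal.ofReal_le_ofReal hle))
  have hmnot : m ∉ F.image Subtype.val := by
    intro hmem
    obtain ⟨⟨l, hl⟩, _, rfl⟩ := Finset.mem_image.mp hmem
    obtain ⟨h0, hlast⟩ := ReachRuns.getLast_mem hl
    exact hcon _ (List.getLast_mem h0) hlast
  set G := insert m (F.image Subtype.val) with hG
  have hGsum : ∑ l ∈ G, runProb μ l = ε + ∑ l ∈ F, runProb μ (l : List S) := by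
    rw [hG, Finset.sum_insert hmnot,
      Finset.sum_image (fun a _ b _ h => Subtype.coe_injective h)]
  have hfinlast : m.getLast? = some fin := by
    obtain ⟨t, ht, htl⟩ := hm.2.2.2.1
    rwa [Set.mem_singleton_iff.mp ht] at htl
  have hle1 : ∑ l ∈ G, runProb μ l ≤ 1 := by
    apply prefixfree_sum_le hnn hrow (G.sup List.length) u
    · intro l hl; exact Finset.le_sup (f := List.length) hl
    · intro l hl
      rcases Finset.mem_insert.mp hl with rfl | hl
      · exact ⟨hm.1, hm.2.1, hm.2.2.2.2⟩
      · obtain ⟨⟨l, hl'⟩, _, rfl⟩ := Finset.mem_image.mp hl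
        exact ⟨hl'.1, hl'.2.1, hl'.2.2.2.2⟩
    · intro l₁ hl₁ l₂ hl₂ hne hpre
      rcases Finset.mem_insert.mp hl₁ with h₁ | h₁
      · rcases Finset.mem_insert.mp hl₂ with h₂ | h₂
        · exact hne (h₁.trans h₂.symm)
        · -- l₁ = m is a prefix of l₂ ∈ RA
          subst h₁
          obtain ⟨⟨l₂', hl₂'⟩, _, rfl⟩ := Finset.mem_image.mp h₂
          obtain ⟨r, hr⟩ := hpre
          have hr' : l₁ ++ r = l₂' := hr
          have hr0 : r ≠ [] := by
            rintro rfl; rw [List.append_nil] at hr'; exact hne (by simpa using hr')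
          have hchain := hl₂'.2.2.2.2
          rw [← hr'] at hchain
          have hyhead : r.head? = some (r.head hr0) := List.head?_eq_head hr0
          have := (List.isChain_append.mp hchain).2.2 fin hfinlast (r.head hr0) hyhead
          rw [hfin0] at this
          exact lt_irrefl 0 this
      · rcases Finset.mem_insert.mp hl₂ with h₂ | h₂
        · -- l₁ ∈ RA is a prefix of m
          subst h₂
          obtain ⟨⟨l₁', hl₁'⟩, _, rfl⟩ := Finset.mem_image.mp h₁
          obtain ⟨h0, hlast⟩ := ReachRuns.getLast_mem hl₁'
          exact hcon _ (hpre.subset (List.getLast_mem h0)) hlast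
        · obtain ⟨⟨l₁', h₁'⟩, _, rfl⟩ := Finset.mem_image.mp h₁
          obtain ⟨⟨l₂', h₂'⟩, _, rfl⟩ := Finset.mem_image.mp h₂
          exact ReachRuns.prefixfree h₁' h₂' hne hpre
  linarith

end Main

section Equiv
set_option linter.unusedSectionVars false
variable {S : Type*} [Fintype S] {μ : S → S → ℝ} {A : Set S} {fin u : S}

noncomputable def decompEquiv (μ : S → S → ℝ) (A : Set S) (fin u : S)
    (hfin0 : ∀ b, μ fin b = 0) (huA : u ∉ A)
    (hhit : ∀ m ∈ ReachRuns μ {fin} u, ∃ x ∈ m, x ∈ A) :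
    (Σ l : ReachRuns μ A u, ReachRuns μ {fin} ((l : List S).getLastD u)) ≃
      ReachRuns μ {fin} u where
  toFun x := ⟨(x.1 : List S).dropLast ++ (x.2 : List S),
    join_mem hfin0 huA x.1.2 x.2.2⟩
  invFun m :=
    ⟨⟨_, (split_mem huA m.2 (hhit m m.2)).choose_spec.1⟩,
     ⟨_, (split_mem huA m.2 (hhit m m.2)).choose_spec.2⟩⟩
  left_inv := by
    rintro ⟨⟨l, hl⟩, ⟨d, hd⟩⟩
    obtain ⟨hlen, hlA, hdl0, hdlh, h0, hld⟩ := RA_facts huA hl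
    set m : List S := l.dropLast ++ d with hmdef
    have hkey := takeWhile_dropWhile_append (p := pA A) (l₁ := l.dropLast) (l₂ := d)
      (fun x hx => pA_true.mpr (hl.2.2.1 x hx))
      (fun y hy => by
        rw [hd.2.1] at hy
        exact pA_false.mpr (Option.some_inj.mp hy ▸ hlA))
    have htk : m.takeWhile (pA A) = l.dropLast := hkey.1
    have hdw : m.dropWhile (pA A) = d := hkey.2
    apply sigma_ext' (ReachRuns μ A u) (fun l => l.getLastD u)
      (fun g => ReachRuns μ {fin} g)
    · -- first components
      show m.takeWhile (pA A) ++ [(m.dropWhile (pA A)).head _] = l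
      have hdhead : (m.dropWhile (pA A)).head
          (split_mem huA (join_mem hfin0 huA hl hd)
            (hhit _ (join_mem hfin0 huA hl hd))).choose = l.getLastD u := by
        apply Option.some_inj.mp
        rw [← List.head?_eq_head]
        rw [hdw]
        exact hd.2.1
      have hfinish : l.dropLast ++ [l.getLastD u] = l := by
        rw [hld]; exact List.dropLast_append_getLast h0
      refine Eq.trans ?_ hfinish
      congr 1
      rw [hdhead]
    · show m.dropWhile (pA A) = d
      exact hdw
  right_inv := by
    rintro ⟨m, hm⟩
    apply Subtype.ext
    show (m.takeWhile (pA A) ++ [(m.dropWhile (pA A)).head _]).dropLast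
        ++ m.dropWhile (pA A) = m
    rw [List.dropLast_concat]
    exact List.takeWhile_append_dropWhile

lemma Q_fin_eq (hnn : ∀ a b, 0 ≤ μ a b) (hrow : ∀ a, ∑ b : S, μ a b ≤ 1)
    (hfin0 : ∀ b, μ fin b = 0) (huA : u ∉ A) (hQA : Q μ A u = 1)
    {c : ℝ} (hc : ∀ w ∈ A, Q μ ({fin} : Set S) w = ENNReal.ofReal c) :
    Q μ ({fin} : Set S) u = ENNReal.ofReal c := by
  have hhit : ∀ m ∈ ReachRuns μ {fin} u, ∃ x ∈ m, x ∈ A :=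
    fun m hm => hits_of_Q_eq_one hnn hrow hfin0 hQA hm
  set e := decompEquiv μ A fin u hfin0 huA hhit with he
  have h1 : Q μ ({fin} : Set S) u
      = ∑' x : (Σ l : ReachRuns μ A u, ReachRuns μ {fin} ((l : List S).getLastD u)),
          ENNReal.ofReal (runProb μ ((e x : ReachRuns μ {fin} u) : List S)) :=
    (e.tsum_eq fun m : ReachRuns μ {fin} u => ENNReal.ofReal (runProb μ (m : List S))).symm
  rw [h1, ENNReal.tsum_sigma']
  have h3 : ∀ l : ReachRuns μ A u,
      (∑' d : ReachRuns μ {fin} ((l : List S).getLastD u),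
        ENNReal.ofReal (runProb μ ((e ⟨l, d⟩ : ReachRuns μ {fin} u) : List S)))
      = ENNReal.ofReal (runProb μ (l : List S)) * ENNReal.ofReal c := by
    intro l
    obtain ⟨hlen, hlA, hdl0, hdlh, h0, hld⟩ := RA_facts huA l.2
    have h2 : ∀ d : ReachRuns μ {fin} ((l : List S).getLastD u),
        ENNReal.ofReal (runProb μ ((e ⟨l, d⟩ : ReachRuns μ {fin} u) : List S))
        = ENNReal.ofReal (runProb μ (l : List S))
            * ENNReal.ofReal (runProb μ (d : List S)) := by
      intro d
      have hjoin : ((e ⟨l, d⟩ : ReachRuns μ {fin} u) : List S)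
          = (l : List S).dropLast ++ (d : List S) := rfl
      obtain ⟨dt, hdt⟩ := List.head?_eq_some_iff.mp d.2.2.1
      have hsplit : runProb μ ((l : List S).dropLast ++ (d : List S))
          = runProb μ (l : List S) * runProb μ (d : List S) := by
        rw [hdt, hld, runProb_append μ ((l : List S).getLast h0) dt,
          List.dropLast_append_getLast h0]
      rw [hjoin, hsplit,
        ENNReal.ofReal_mul (runProb_pos (l.2.2.2.2.2)).le]
    rw [tsum_congr h2, ENNReal.tsum_mul_left]
    have : (∑' d : ReachRuns μ {fin} ((l : List S).getLastD u),
        ENNReal.ofReal (runProb μ (d : List S)))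
        = Q μ ({fin} : Set S) ((l : List S).getLastD u) := rfl
    rw [this, hc _ hlA]
  rw [tsum_congr h3, ENNReal.tsum_mul_right]
  have : (∑' l : ReachRuns μ A u, ENNReal.ofReal (runProb μ (l : List S))) = Q μ A u := rfl
  rw [this, hQA, one_mul]

end Equiv

open Classical in
theorem stmt9 {S : Type*} [Fintype S] (E : S → S → Prop) (fin fail : S)
    (hne : fin ≠ fail)
    (habs : ∀ s', ¬ E fin s' ∧ ¬ E fail s')
    (htwo : ∀ s, s ≠ fin → s ≠ fail →
      (Finset.univ.filter fun s' => E s s').card = 2)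
    (u : S) (hu : u ≠ fin ∧ u ≠ fail)
    (A : Set S) (hA : ∃ v₀, A = {w | nwrEquiv E fin fail w v₀})
    (has : ∀ val, gpMC E fin fail val → reachProb val A u = 1) :
    (∀ v ∈ A, ∀ val, gpMC E fin fail val →
      reachProb val {fin} u = reachProb val {fin} v) ∧ u ∈ A := by
  obtain ⟨v₀, hA0⟩ := hA
  have key : ∀ val, gpMC E fin fail val →
      reachProb val {fin} u = reachProb val {fin} v₀ := by
    intro val hval
    have hnn : ∀ a b, 0 ≤ val a b := by
      intro a b
      by_cases h : E a b
      · exact (hval.1 a b h).le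
      · exact (hval.2.1 a b h).ge
    have hfin0 : ∀ b, val fin b = 0 := fun b => hval.2.1 _ _ (habs b).1
    have hfail0 : ∀ b, val fail b = 0 := fun b => hval.2.1 _ _ (habs b).2
    have hrow : ∀ a, ∑ b : S, val a b ≤ 1 := by
      intro a
      by_cases h1 : a = fin
      · subst h1; simp [hfin0]
      · by_cases h2 : a = fail
        · subst h2; simp [hfail0]
        · exact (hval.2.2 a h1 h2).le
    by_cases huA : u ∈ A
    · have hnwr : nwrEquiv E fin fail u v₀ := by rw [hA0] at huA; exact huA
      exact hnwr val hval
    · set c := reachProb val {fin} v₀ with hc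
      have hc0 : 0 ≤ c := reachProb_nonneg _ _ _
      have hQA : Q val A u = 1 := by
        have h1 := ofReal_reachProb_eq_Q huA hnn hrow
        rw [has val hval] at h1
        rw [← h1]; exact ENNReal.ofReal_one
      have hQfin : ∀ w ∈ A, Q val ({fin} : Set S) w = ENNReal.ofReal c := by
        intro w hw
        have hwv : nwrEquiv E fin fail w v₀ := by rw [hA0] at hw; exact hw
        by_cases hwf : w = fin
        · subst hwf
          rw [Q_fin_self hfin0]
          have hc1 : c = 1 := by
            rw [hc, ← hwv val hval, reachProb]
            exact if_pos (Set.mem_singleton _)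
          rw [hc1, ENNReal.ofReal_one]
        · rw [← ofReal_reachProb_eq_Q (by simpa using hwf) hnn hrow, hwv val hval]
      have hQu : Q val ({fin} : Set S) u = ENNReal.ofReal c :=
        Q_fin_eq hnn hrow hfin0 huA hQA hQfin
      have h2 := ofReal_reachProb_eq_Q
        (show u ∉ ({fin} : Set S) by simpa using hu.1) hnn hrow
      rw [hQu] at h2
      exact (ENNReal.ofReal_eq_ofReal_iff (reachProb_nonneg _ _ _) hc0).mp h2
  constructor
  · intro v hv val hval
    have hvv : nwrEquiv E fin fail v v₀ := by rw [hA0] at hv; exact hv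
    exact (key val hval).trans (hvv val hval).symm
  · rw [hA0]; exact key
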